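/- arXiv:2511.08788 — 2 statements merged into one kernel-verified Lean document; each statement's English description precedes it below -/
import Mathlib

section
/- Let F/F_q be a function field of genus g with N_F rational places. Then the gonality γ := min{deg (f)_∞ : f ∈ F \ F_q} satisfies γ ≥ N_F/(q+1). -/
/-!
A nonconstant `f` is transcendental, and since `F/F_q` has transcendence degree one, `F/F_q(f)`
is finite. A rational place `P` gives a value `f(P) ∈ ℙ¹(F_q)`, and places with the same value
lie over the same place of `F_q(f)`: the valuation of `p(f)` is `deg p` or `ord_a p` times a
positive integer depending on `P`. Hence they all have the same valuation ring on `F_q(f)`.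
For `s` such places `P_i`, weak approximation gives `u_i` that are units at `P_i` and vanish at
the other `P_j`. A nontrivial `F_q(f)`-relation among the `u_i`, scaled so that all coefficients
are integral and one of them equals `1`, reduces modulo that `P_i` to `res u_i = 0`, which is
absurd. So each of the `q + 1` fibres of `P ↦ f(P)` has at most `[F : F_q(f)]` elements.
-/

/-- A rational (degree-one) place of a function field `F/F_q`: a normalized discrete
valuation `v` on `F` that is trivial on the constants, together with its residue map
`res : F → F_q` (extended by `0` at poles), whose residue field is `F_q` itself. -/
structure RationalPlace (Fq F : Type*) [Field Fq] [Field F] [Algebra Fq F] where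
  v : F → ℤ
  v_zero : v 0 = 0
  v_mul : ∀ x y : F, x ≠ 0 → y ≠ 0 → v (x * y) = v x + v y
  v_add : ∀ x y : F, x ≠ 0 → y ≠ 0 → x + y ≠ 0 → min (v x) (v y) ≤ v (x + y)
  v_algebraMap : ∀ a : Fq, a ≠ 0 → v (algebraMap Fq F a) = 0
  v_surj : ∃ x : F, x ≠ 0 ∧ v x = 1
  res : F → Fq
  res_pole : ∀ x : F, v x < 0 → res x = 0
  res_add : ∀ x y : F, 0 ≤ v x → 0 ≤ v y → res (x + y) = res x + res y
  res_mul : ∀ x y : F, 0 ≤ v x → 0 ≤ v y → res (x * y) = res x * res y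
  res_algebraMap : ∀ a : Fq, res (algebraMap Fq F a) = a
  res_eq_zero_iff : ∀ x : F, 0 ≤ v x → (res x = 0 ↔ x = 0 ∨ 0 < v x)

open Polynomial IntermediateField

open IntermediateField.algebraAdjoinAdjoin in
theorem isTranscendenceBasis_of_finiteDimensional_adjoin {K L : Type*} [Field K] [Field L]
    [Algebra K L] {x : L} (hx : Transcendental K x) [FiniteDimensional K⟮x⟯ L] :
    IsTranscendenceBasis K (fun _ : Unit ↦ x) := by
  refine isTranscendenceBasis_iff_algebraicIndependent_isAlgebraic.2
    ⟨algebraicIndependent_unique_type_iff.2 hx, ?_⟩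
  rw [Set.range_const]
  exact .trans _ K⟮x⟯ _

theorem finiteDimensional_adjoin_of_transcendental {K L : Type*} [Field K] [Field L]
    [Algebra K L] {x f : L} (hx : Transcendental K x) [FiniteDimensional K⟮x⟯ L]
    (hf : Transcendental K f) : FiniteDimensional K⟮f⟯ L := by
  have hbasis := isTranscendenceBasis_of_finiteDimensional_adjoin hx
  have hf' : IsTranscendenceBasis K (fun _ : Unit ↦ f) :=
    (algebraicIndependent_unique_type_iff.2 hf).isTranscendenceBasis_of_lift_trdeg_le_of_finite
      hbasis.lift_cardinalMk_eq_trdeg.ge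
  have : Algebra.IsAlgebraic K⟮f⟯ L := hf'.isAlgebraic_iff.2 fun _ ↦
    isAlgebraic_algebraMap (AdjoinSimple.gen K f)
  have : Algebra.EssFiniteType K K⟮x⟯ := essFiniteType_iff.2 (fg_adjoin_of_finite (by simp))
  have : Algebra.EssFiniteType K L := .comp K K⟮x⟯ L
  have : Algebra.EssFiniteType K⟮f⟯ L := .of_comp K _ _
  exact Algebra.finite_of_essFiniteType_of_isAlgebraic

namespace RationalPlace

variable {Fq F : Type*} [Field Fq] [Field F] [Algebra Fq F] (P : RationalPlace Fq F)

lemma v_one : P.v 1 = 0 := by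
  simpa using (P.v_mul 1 1 one_ne_zero one_ne_zero).symm

lemma v_inv {x : F} (hx : x ≠ 0) : P.v x⁻¹ = -P.v x := by
  have h := P.v_mul x x⁻¹ hx (inv_ne_zero hx)
  rw [mul_inv_cancel₀ hx, P.v_one] at h
  omega

lemma v_div {x y : F} (hx : x ≠ 0) (hy : y ≠ 0) : P.v (x / y) = P.v x - P.v y := by
  rw [div_eq_mul_inv, P.v_mul x y⁻¹ hx (inv_ne_zero hy), P.v_inv hy, sub_eq_add_neg]

lemma v_pow {x : F} (hx : x ≠ 0) (n : ℕ) : P.v (x ^ n) = n * P.v x := by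
  induction n with
  | zero => simpa using P.v_one
  | succ n ih =>
    rw [pow_succ, P.v_mul _ _ (pow_ne_zero _ hx) hx, ih]
    push_cast; ring

lemma v_zpow {x : F} (hx : x ≠ 0) (n : ℤ) : P.v (x ^ n) = n * P.v x := by
  cases n with
  | ofNat n => simpa using P.v_pow hx n
  | negSucc n =>
    rw [zpow_negSucc, P.v_inv (pow_ne_zero _ hx), P.v_pow hx, Int.negSucc_eq]
    push_cast; ring

lemma v_neg (x : F) : P.v (-x) = P.v x := by
  rcases eq_or_ne x 0 with rfl | hx
  · simp
  have h1 := P.v_mul (-1) (-1) (by simp) (by simp)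
  rw [neg_one_mul, neg_neg, P.v_one] at h1
  rw [← neg_one_mul, P.v_mul _ _ (by simp) hx]
  omega

lemma ne_zero_of_v_ne_zero {x : F} (h : P.v x ≠ 0) : x ≠ 0 := by
  rintro rfl
  exact h P.v_zero

lemma min_le_v_add {x y : F} (h : x + y ≠ 0) : min (P.v x) (P.v y) ≤ P.v (x + y) := by
  rcases eq_or_ne x 0 with rfl | hx
  · simp
  rcases eq_or_ne y 0 with rfl | hy
  · simp
  exact P.v_add x y hx hy h

lemma add_ne_zero_of_v_lt {x y : F} (h : P.v x < P.v y) : x + y ≠ 0 := fun h0 ↦ by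
  rw [eq_neg_of_add_eq_zero_right h0, P.v_neg] at h
  exact h.false

lemma v_add_eq_left {x y : F} (hx : x ≠ 0) (h : P.v x < P.v y) : P.v (x + y) = P.v x := by
  have h₁ := P.min_le_v_add (P.add_ne_zero_of_v_lt h)
  have h₂ := P.min_le_v_add (x := x + y) (y := -y) (by simpa using hx)
  rw [add_neg_cancel_right, P.v_neg] at h₂
  omega

lemma v_add_eq_right {x y : F} (hy : y ≠ 0) (h : P.v y < P.v x) : P.v (x + y) = P.v y := by
  rw [add_comm, P.v_add_eq_left hy h]

def integers : Subalgebra Fq F where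
  carrier := {x | 0 ≤ P.v x}
  mul_mem' {x y} hx hy := by
    rcases eq_or_ne x 0 with rfl | hx0
    · simp [P.v_zero]
    rcases eq_or_ne y 0 with rfl | hy0
    · simp [P.v_zero]
    simp only [Set.mem_ofPred_eq, P.v_mul x y hx0 hy0] at *
    omega
  add_mem' {x y} hx hy := by
    rcases eq_or_ne (x + y) 0 with h | h
    · simp [h, P.v_zero]
    have := P.min_le_v_add h
    simp only [Set.mem_ofPred_eq] at *
    omega
  algebraMap_mem' a := by
    rcases eq_or_ne a 0 with rfl | ha
    · simp [P.v_zero]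
    · simp [P.v_algebraMap a ha]

lemma mem_integers {x : F} : x ∈ P.integers ↔ 0 ≤ P.v x := Iff.rfl

def residue : P.integers →ₐ[Fq] Fq where
  toFun x := P.res x
  map_one' := by simpa using P.res_algebraMap 1
  map_mul' x y := P.res_mul x y x.2 y.2
  map_zero' := by simpa using P.res_algebraMap 0
  map_add' x y := P.res_add x y x.2 y.2
  commutes' a := P.res_algebraMap a

lemma residue_apply (x : P.integers) : P.residue x = P.res x := rfl

lemma res_zero : P.res 0 = 0 := map_zero P.residue

lemma res_one : P.res 1 = 1 := map_one P.residue

lemma res_sub_algebraMap {x : F} (hx : 0 ≤ P.v x) (a : Fq) :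
    P.res (x - algebraMap Fq F a) = P.res x - a := by
  have := map_sub P.residue ⟨x, hx⟩ (algebraMap Fq P.integers a)
  simpa [residue_apply] using this

lemma res_sum {ι : Type*} (s : Finset ι) (x : ι → F) (hx : ∀ i, 0 ≤ P.v (x i)) :
    P.res (∑ i ∈ s, x i) = ∑ i ∈ s, P.res (x i) := by
  have h := map_sum P.residue (fun i ↦ (⟨x i, hx i⟩ : P.integers)) s
  simp only [residue_apply, AddSubmonoidClass.coe_finsetSum] at h
  exact h

lemma res_aeval {x : F} (hx : 0 ≤ P.v x) (p : Fq[X]) :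
    P.res (aeval x p) = p.eval (P.res x) := by
  have := aeval_algHom_apply P.residue (⟨x, hx⟩ : P.integers) p
  simpa [residue_apply, aeval_subalgebra_coe] using this.symm

lemma v_aeval_nonneg {x : F} (hx : 0 ≤ P.v x) (p : Fq[X]) : 0 ≤ P.v (aeval x p) := by
  have h := (aeval (⟨x, hx⟩ : P.integers) p).2
  rwa [aeval_subalgebra_coe] at h

lemma res_of_v_pos {x : F} (h : 0 < P.v x) : P.res x = 0 :=
  (P.res_eq_zero_iff x h.le).2 (Or.inr h)

lemma res_ne_zero {x : F} (hx : x ≠ 0) (h : P.v x = 0) : P.res x ≠ 0 := fun h0 ↦ by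
  rcases (P.res_eq_zero_iff x h.ge).1 h0 with h0 | h0
  · exact hx h0
  · exact h0.ne' h

lemma res_eq_iff {x : F} (hx : 0 ≤ P.v x) (a : Fq) :
    P.res x = a ↔ x = algebraMap Fq F a ∨ 0 < P.v (x - algebraMap Fq F a) := by
  have hxa : 0 ≤ P.v (x - algebraMap Fq F a) :=
    P.integers.sub_mem hx (P.integers.algebraMap_mem a)
  rw [← sub_eq_zero, ← P.res_sub_algebraMap hx, P.res_eq_zero_iff _ hxa, sub_eq_zero]

section

variable {P} {Q : RationalPlace Fq F}

lemma nonneg_v_of_forall_v_pos_imp (h : ∀ z, 0 < P.v z → 0 < Q.v z) {x : F}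
    (hx : 0 ≤ P.v x) : 0 ≤ Q.v x := by
  obtain ⟨π, hπ0, hπ⟩ := P.v_surj
  rcases eq_or_ne x 0 with rfl | hx0
  · simp [Q.v_zero]
  have he : 0 < Q.v π := h π (by omega)
  have hpos := h (x ^ (Q.v π).toNat * π) <| by
    rw [P.v_mul _ _ (pow_ne_zero _ hx0) hπ0, P.v_pow hx0, hπ]
    positivity
  rw [Q.v_mul _ _ (pow_ne_zero _ hx0) hπ0, Q.v_pow hx0, Int.toNat_of_nonneg he.le] at hpos
  nlinarith

lemma v_eq_of_forall_v_pos_imp (h : ∀ z, 0 < P.v z → 0 < Q.v z) : P.v = Q.v := by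
  obtain ⟨π, hπ0, hπ⟩ := P.v_surj
  have hunit : ∀ x, P.v x = 0 → Q.v x = 0 := fun x hx ↦ by
    rcases eq_or_ne x 0 with rfl | hx0
    · exact Q.v_zero
    have h₁ := nonneg_v_of_forall_v_pos_imp h hx.ge
    have h₂ := nonneg_v_of_forall_v_pos_imp h (x := x⁻¹) (by rw [P.v_inv hx0]; omega)
    rw [Q.v_inv hx0] at h₂
    omega
  have hscale : ∀ x, Q.v x = P.v x * Q.v π := fun x ↦ by
    rcases eq_or_ne x 0 with rfl | hx0
    · simp [P.v_zero, Q.v_zero]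
    have hπk : π ^ (-P.v x) ≠ 0 := zpow_ne_zero _ hπ0
    have := hunit (x * π ^ (-P.v x)) (by rw [P.v_mul _ _ hx0 hπk, P.v_zpow hπ0, hπ]; ring)
    rw [Q.v_mul _ _ hx0 hπk, Q.v_zpow hπ0] at this
    linarith
  obtain ⟨y, -, hy⟩ := Q.v_surj
  rw [hscale] at hy
  have he : Q.v π = 1 := Int.eq_one_of_mul_eq_one_left (h π (by omega)).le hy
  funext x
  rw [hscale, he, mul_one]

lemma eq_of_v_eq (h : P.v = Q.v) : P = Q := by
  have hres : P.res = Q.res := by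
    funext z
    rcases lt_or_ge (P.v z) 0 with hz | hz
    · rw [P.res_pole z hz, Q.res_pole z (h ▸ hz)]
    · exact ((Q.res_eq_iff (h ▸ hz) _).2 (h ▸ (P.res_eq_iff hz _).1 rfl)).symm
  cases P
  cases Q
  simp_all

lemma exists_v_pos_v_nonpos (hPQ : P ≠ Q) : ∃ z, 0 < P.v z ∧ Q.v z ≤ 0 := by
  by_contra! h
  exact hPQ (eq_of_v_eq (v_eq_of_forall_v_pos_imp h))

lemma exists_v_pos_v_neg (hPQ : P ≠ Q) : ∃ z, 0 < P.v z ∧ Q.v z < 0 := by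
  obtain ⟨z₁, hP₁, hQ₁⟩ := exists_v_pos_v_nonpos hPQ
  obtain ⟨z₂, hQ₂, hP₂⟩ := exists_v_pos_v_nonpos hPQ.symm
  have h₁ := P.ne_zero_of_v_ne_zero hP₁.ne'
  have h₂ := Q.ne_zero_of_v_ne_zero hQ₂.ne'
  exact ⟨z₁ / z₂, by rw [P.v_div h₁ h₂]; omega, by rw [Q.v_div h₁ h₂]; omega⟩

lemma exists_v_pos_forall_v_neg {T : Finset (RationalPlace Fq F)} (hP : P ∉ T) :
    ∃ z, 0 < P.v z ∧ ∀ Q ∈ T, Q.v z < 0 := by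
  classical
  induction T using Finset.induction_on with
  | empty =>
    obtain ⟨π, -, hπ⟩ := P.v_surj
    exact ⟨π, by omega, by simp⟩
  | insert R T hRT ih =>
    obtain ⟨y, hPy, hTy⟩ := ih fun h ↦ hP (Finset.mem_insert_of_mem h)
    obtain ⟨z, hPz, hRz⟩ :=
      exists_v_pos_v_neg fun h : P = R ↦ hP (h ▸ Finset.mem_insert_self P T)
    have hy0 := P.ne_zero_of_v_ne_zero hPy.ne'
    have hz0 := P.ne_zero_of_v_ne_zero hPz.ne'
    obtain ⟨B, hB⟩ := ((insert R T).image fun Q ↦ -Q.v y).bddAbove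
    set r := B.toNat + 1
    have hr : ∀ Q ∈ insert R T, -Q.v y < r := fun Q hQ ↦ by
      have := hB (Finset.mem_image_of_mem (fun Q ↦ -Q.v y) hQ)
      omega
    -- at each `Q`, the summand of smaller valuation has negative valuation (`r` is large)
    have hneg : ∀ Q ∈ insert R T, Q.v (y + z ^ r) < 0 := fun Q hQ ↦ by
      rcases lt_or_ge (Q.v z) 0 with hQz | hQz
      · have : Q.v (z ^ r) < Q.v y := by
          rw [Q.v_pow hz0]
          nlinarith [hr Q hQ]
        rw [Q.v_add_eq_right (pow_ne_zero _ hz0) this, Q.v_pow hz0]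
        exact mul_neg_of_pos_of_neg (by positivity) hQz
      · have hQT : Q ∈ T := (Finset.mem_insert.1 hQ).resolve_left (by rintro rfl; omega)
        have : Q.v y < Q.v (z ^ r) := by
          rw [Q.v_pow hz0]
          nlinarith [hTy Q hQT]
        rw [Q.v_add_eq_left hy0 this]
        exact hTy Q hQT
    refine ⟨y + z ^ r, ?_, hneg⟩
    have hne := R.ne_zero_of_v_ne_zero (hneg R (Finset.mem_insert_self R T)).ne
    have := P.min_le_v_add hne
    rw [P.v_pow hz0] at this
    have : (0 : ℤ) < r * P.v z := by positivity
    omega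

lemma exists_v_eq_zero_forall_v_pos (S : Finset (RationalPlace Fq F)) :
    ∃ u, u ≠ 0 ∧ P.v u = 0 ∧ ∀ Q ∈ S, Q ≠ P → 0 < Q.v u := by
  classical
  obtain ⟨z, hPz, hQz⟩ := exists_v_pos_forall_v_neg (S.notMem_erase P)
  have hz0 := P.ne_zero_of_v_ne_zero hPz.ne'
  have hlt : P.v 1 < P.v z := by rw [P.v_one]; exact hPz
  have hne : 1 + z ≠ 0 := P.add_ne_zero_of_v_lt hlt
  refine ⟨(1 + z)⁻¹, inv_ne_zero hne, ?_, fun Q hQ hQP ↦ ?_⟩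
  · rw [P.v_inv hne, P.v_add_eq_left one_ne_zero hlt, P.v_one, neg_zero]
  · have hQz := hQz Q (Finset.mem_erase.2 ⟨hQP, hQ⟩)
    rw [Q.v_inv hne, Q.v_add_eq_right hz0 (by rw [Q.v_one]; exact hQz)]
    omega

end

theorem card_le_finrank {K : Type*} [Field K] [Algebra K F] [FiniteDimensional K F]
    (S : Finset (RationalPlace Fq F))
    (hS : ∀ P ∈ S, ∀ Q ∈ S, ∀ c : K,
      0 ≤ P.v (algebraMap K F c) → 0 ≤ Q.v (algebraMap K F c)) :
    S.card ≤ Module.finrank K F := by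
  classical
  choose u hu0 huP huQ using fun P : S ↦ exists_v_eq_zero_forall_v_pos (P := P.1) S
  suffices LinearIndependent K fun P : S ↦ u P by
    simpa using this.fintype_card_le_finrank
  rw [Fintype.linearIndependent_iff]
  intro c hc
  by_contra! hne
  obtain ⟨P₀, hP₀⟩ := hne
  -- normalize the relation by a coefficient `c P₁` of least valuation at `P₀`
  obtain ⟨P₁, hP₁, hmin⟩ := ({P | c P ≠ 0} : Finset S).exists_min_image
    (fun P ↦ P₀.1.v (algebraMap K F (c P))) ⟨P₀, by simpa using hP₀⟩
  have hc₁ : c P₁ ≠ 0 := by simpa using hP₁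
  set t : S → F := fun P ↦ algebraMap K F (c P / c P₁)
  have ht : ∀ P, 0 ≤ P₁.1.v (t P) := fun P ↦ by
    refine hS P₀ P₀.2 P₁ P₁.2 _ ?_
    rcases eq_or_ne (c P) 0 with h | h
    · simp [h, v_zero]
    rw [map_div₀, P₀.1.v_div (by simpa using h) (by simpa using hc₁)]
    exact sub_nonneg.2 (hmin P (by simpa using h))
  have hu : ∀ P, 0 ≤ P₁.1.v (u P) := fun P ↦ by
    rcases eq_or_ne P P₁ with rfl | h
    · exact (huP P).ge
    · exact (huQ P P₁ P₁.2 (Subtype.coe_ne_coe.2 (Ne.symm h))).le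
  have hsum : ∑ P, t P * u P = 0 := by
    simp only [t, map_div₀, div_mul_eq_mul_div, ← Finset.sum_div, ← Algebra.smul_def, hc,
      zero_div]
  have hres := congrArg P₁.1.res hsum
  rw [P₁.1.res_sum _ _ fun P ↦ P₁.1.integers.mul_mem (ht P) (hu P),
    P₁.1.res_zero, Finset.sum_eq_single P₁] at hres
  · have ht₁ : t P₁ = 1 := by simp [t, hc₁]
    rw [P₁.1.res_mul _ _ (ht P₁) (hu P₁), ht₁, P₁.1.res_one, one_mul] at hres
    exact P₁.1.res_ne_zero (hu0 P₁) (huP P₁) hres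
  · intro P _ hP
    rw [P₁.1.res_mul _ _ (ht P) (hu P),
      P₁.1.res_of_v_pos (huQ P P₁ P₁.2 (Subtype.coe_ne_coe.2 (Ne.symm hP))), mul_zero]
  · simp

lemma v_mul_of_res_ne_zero {x y : F} (hx : x ≠ 0) (hy : 0 ≤ P.v y) (hres : P.res y ≠ 0) :
    P.v (x * y) = P.v x := by
  have hy0 : y ≠ 0 := fun h ↦ hres (h ▸ P.res_zero)
  have hvy : P.v y = 0 := by
    by_contra hne
    exact hres (P.res_of_v_pos (lt_of_le_of_ne hy (Ne.symm hne)))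
  rw [P.v_mul x y hx hy0, hvy, add_zero]

lemma v_aeval_of_v_neg {x : F} (hx : P.v x < 0) {p : Fq[X]} (hp : p ≠ 0) :
    P.v (aeval x p) = p.natDegree * P.v x := by
  have hx0 : x ≠ 0 := P.ne_zero_of_v_ne_zero hx.ne
  have hinv : 0 < P.v x⁻¹ := by rw [P.v_inv hx0]; omega
  have : Invertible x := invertibleOfNonzero hx0
  -- `x⁻¹` lies in the maximal ideal, so `(reverse p)(x⁻¹)` has residue `leadingCoeff p ≠ 0`
  have key : aeval x p = x ^ p.natDegree * aeval x⁻¹ p.reverse := by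
    rw [aeval_def, aeval_def, ← eval₂_reverse_mul_pow _ x, invOf_eq_inv, mul_comm]
  rw [key, P.v_mul_of_res_ne_zero (pow_ne_zero _ hx0) (P.v_aeval_nonneg hinv.le _), P.v_pow hx0]
  rw [P.res_aeval hinv.le, P.res_of_v_pos hinv, ← coeff_zero_eq_eval_zero, coeff_zero_reverse]
  exact leadingCoeff_ne_zero.2 hp

lemma v_aeval_of_v_sub_pos {x : F} {a : Fq} (h : 0 < P.v (x - algebraMap Fq F a))
    {p : Fq[X]} (hp : p ≠ 0) :
    P.v (aeval x p) = p.rootMultiplicity a * P.v (x - algebraMap Fq F a) := by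
  have hxa : x - algebraMap Fq F a ≠ 0 := P.ne_zero_of_v_ne_zero h.ne'
  have hx : 0 ≤ P.v x := P.mem_integers.1 <| by
    simpa using P.integers.add_mem h.le (P.integers.algebraMap_mem a)
  have hres : P.res x = a := (P.res_eq_iff hx a).2 (Or.inr h)
  have key : aeval x p = (x - algebraMap Fq F a) ^ p.rootMultiplicity a *
      aeval x (p /ₘ (X - C a) ^ p.rootMultiplicity a) := by
    conv_lhs => rw [← pow_mul_divByMonic_rootMultiplicity_eq p a]
    simp
  rw [key, P.v_mul_of_res_ne_zero (pow_ne_zero _ hxa) (P.v_aeval_nonneg hx _), P.v_pow hxa]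
  rw [P.res_aeval hx, hres]
  exact eval_divByMonic_pow_rootMultiplicity_ne_zero a hp

lemma nonneg_v_of_v_aeval_eq_mul {P Q : RationalPlace Fq F} {f : F} (ord : Fq[X] → ℤ)
    {eP eQ : ℤ} (heP : 0 < eP) (heQ : 0 < eQ)
    (hP : ∀ p : Fq[X], p ≠ 0 → P.v (aeval f p) = ord p * eP)
    (hQ : ∀ p : Fq[X], p ≠ 0 → Q.v (aeval f p) = ord p * eQ)
    {g : F} (hg : g ∈ Fq⟮f⟯) (hPg : 0 ≤ P.v g) : 0 ≤ Q.v g := by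
  obtain ⟨p, q, rfl⟩ := (mem_adjoin_simple_iff Fq g).1 hg
  rcases eq_or_ne (aeval f p) 0 with hp | hp
  · simp [hp, Q.v_zero]
  rcases eq_or_ne (aeval f q) 0 with hq | hq
  · simp [hq, Q.v_zero]
  have hp0 : p ≠ 0 := by rintro rfl; simp at hp
  have hq0 : q ≠ 0 := by rintro rfl; simp at hq
  rw [P.v_div hp hq, hP p hp0, hP q hq0, ← sub_mul] at hPg
  rw [Q.v_div hp hq, hQ p hp0, hQ q hq0, ← sub_mul]
  exact mul_nonneg (nonneg_of_mul_nonneg_left hPg heP) heQ.le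

/-- The value of `f` at `P` as a point of `ℙ¹(F_q)`, with `none` the point at infinity. -/
def eval (f : F) : Option Fq := if 0 ≤ P.v f then some (P.res f) else none

lemma v_neg_of_eval_eq_none {f : F} (h : P.eval f = none) : P.v f < 0 := by
  unfold eval at h
  split_ifs at h with hf
  exact not_le.1 hf

lemma v_sub_pos_of_eval_eq_some {f : F} {a : Fq} (h : P.eval f = some a)
    (hf : f ≠ algebraMap Fq F a) : 0 < P.v (f - algebraMap Fq F a) := by
  unfold eval at h
  split_ifs at h with hv
  exact ((P.res_eq_iff hv a).1 (Option.some.inj h)).resolve_left hf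

variable {P} in
lemma nonneg_v_of_eval_eq {Q : RationalPlace Fq F} {f : F} (hf : f ∉ (algebraMap Fq F).range)
    (hPQ : P.eval f = Q.eval f) {g : F} (hg : g ∈ Fq⟮f⟯) (hPg : 0 ≤ P.v g) :
    0 ≤ Q.v g := by
  cases hb : P.eval f with
  | none =>
    have hP := P.v_neg_of_eval_eq_none hb
    have hQ := Q.v_neg_of_eval_eq_none (hPQ ▸ hb)
    refine nonneg_v_of_v_aeval_eq_mul (fun p ↦ -p.natDegree) (neg_pos.2 hP) (neg_pos.2 hQ)
      (fun p hp ↦ ?_) (fun p hp ↦ ?_) hg hPg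
    · rw [P.v_aeval_of_v_neg hP hp]; ring
    · rw [Q.v_aeval_of_v_neg hQ hp]; ring
  | some a =>
    have hfa : f ≠ algebraMap Fq F a := fun h ↦ hf ⟨a, h.symm⟩
    have hP := P.v_sub_pos_of_eval_eq_some hb hfa
    have hQ := Q.v_sub_pos_of_eval_eq_some (hPQ ▸ hb) hfa
    exact nonneg_v_of_v_aeval_eq_mul (fun p ↦ p.rootMultiplicity a) hP hQ
      (fun p hp ↦ P.v_aeval_of_v_sub_pos hP hp) (fun p hp ↦ Q.v_aeval_of_v_sub_pos hQ hp) hg hPg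

theorem card_le_finrank_mul [Fintype Fq] {f : F} (hf : f ∉ (algebraMap Fq F).range)
    [FiniteDimensional Fq⟮f⟯ F] :
    Nat.card (RationalPlace Fq F) ≤ Module.finrank Fq⟮f⟯ F * (Fintype.card Fq + 1) := by
  classical
  cases finite_or_infinite (RationalPlace Fq F) with
  | inr _ => simp
  | inl _ =>
    have := Fintype.ofFinite (RationalPlace Fq F)
    rw [Nat.card_eq_fintype_card, ← Finset.card_univ, ← Fintype.card_option,
      ← Finset.card_univ]
    refine Finset.card_le_mul_card_image_of_maps_to (f := fun P ↦ P.eval f)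
      (fun _ _ ↦ Finset.mem_univ _) _ fun b _ ↦ card_le_finrank _ ?_
    simp only [Finset.mem_filter, Finset.mem_univ, true_and]
    rintro P hP Q hQ c hc
    exact nonneg_v_of_eval_eq hf (hP.trans hQ.symm) c.2 hc

end RationalPlace

/-- Let `F/F_q` be a function field (a finitely generated extension of transcendence
degree one with full constant field `F_q`) with `N_F` rational places.  Then the gonality
`γ = min {deg (f)_∞ : f ∈ F \ F_q} = min {[F : F_q(f)] : f ∈ F \ F_q}` satisfies
`γ ≥ N_F / (q + 1)`; i.e. for every nonconstant `f`, `N_F/(q+1) ≤ [F : F_q(f)]`. -/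
theorem gonality_lower_bound (Fq F : Type*) [Field Fq] [Fintype Fq] [Field F]
    [Algebra Fq F]
    (x : F) (hx : Transcendental Fq x)
    [FiniteDimensional (IntermediateField.adjoin Fq {x}) F]
    (hconst : ∀ z : F, IsAlgebraic Fq z → z ∈ (algebraMap Fq F).range)
    (f : F) (hf : f ∉ (algebraMap Fq F).range) :
    (Nat.card (RationalPlace Fq F) : ℝ) / (Fintype.card Fq + 1)
      ≤ (Module.finrank (IntermediateField.adjoin Fq {f}) F : ℝ) := by
  have : FiniteDimensional Fq⟮f⟯ F :=
    finiteDimensional_adjoin_of_transcendental hx fun h ↦ hf (hconst f h)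
  rw [div_le_iff₀ (by positivity)]
  exact_mod_cast RationalPlace.card_le_finrank_mul hf
end

section
/- Let r be a prime power, q = r², and consider the Hermitian curve equation y^r + y = x^{r+1} over F_q. The number of pairs (α,β) ∈ F_q × F_q satisfying β^r + β = α^{r+1} is exactly r³. -/
open Polynomial

lemma card_root_le' {F : Type*} [Field F] [Fintype F]
    (f : Polynomial F) (hf : f ≠ 0) :
    Nat.card {x : F // f.IsRoot x} ≤ f.natDegree := by
  classical
  rw [Nat.card_eq_fintype_card]
  calc Fintype.card {x : F // f.IsRoot x}
      ≤ Fintype.card f.roots.toFinset := by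
        apply Fintype.card_le_of_injective
          (fun x => ⟨x.1, by simp only [Multiset.mem_toFinset, Polynomial.mem_roots, hf, ne_eq,
            not_false_iff, true_and]; exact x.2⟩)
        intro a b h
        exact Subtype.ext (congrArg Subtype.val h :)
    _ = f.roots.toFinset.card := Fintype.card_coe _
    _ ≤ Multiset.card f.roots := f.roots.toFinset_card_le
    _ ≤ f.natDegree := f.card_roots'

/-- The Hermitian curve `y^r + y = x^{r+1}` over `F_q`, `q = r²`, has exactly `r³`
affine `F_q`-points. -/
theorem hermitian_affine_point_count (r : ℕ) (hr : IsPrimePow r)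
    (F : Type*) [Field F] [Fintype F] (hF : Fintype.card F = r ^ 2) :
    Nat.card {ab : F × F // ab.2 ^ r + ab.2 = ab.1 ^ (r + 1)} = r ^ 3 := by
  classical
  obtain ⟨p, k, hp, hk, rfl⟩ := hr
  have hpp : p.Prime := hp.nat_prime
  haveI : Fact p.Prime := ⟨hpp⟩
  set r := p ^ k with hrdef
  have hr1 : 1 < r := Nat.one_lt_pow hk.ne' hpp.one_lt
  have hr0 : 0 < r := by omega
  -- characteristic of F is p
  have hcharp : CharP F p := by
    obtain ⟨p', hchar⟩ := CharP.exists F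
    haveI := hchar
    have hp'p : p'.Prime := CharP.char_is_prime F p'
    haveI : Fact p'.Prime := ⟨hp'p⟩
    obtain ⟨n, -, hcard⟩ := FiniteField.card F p'
    have : p' = p := by
      have hdvd : p' ∣ p ^ (2 * k) := by
        rw [← pow_mul, mul_comm k 2] at hF
        rw [← hF, hcard]
        exact dvd_pow_self p' n.pos.ne'
      exact (Nat.prime_dvd_prime_iff_eq hp'p hpp).mp (hp'p.dvd_of_dvd_pow hdvd)
    rwa [this] at hchar
  haveI := hcharp
  have hpow : ∀ a : F, a ^ (r * r) = a := by
    intro a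
    have := FiniteField.pow_card a
    rwa [hF, sq] at this
  -- the additive map φ y = y^r + y
  have hadd : ∀ x y : F, (x + y) ^ r = x ^ r + y ^ r := fun x y => add_pow_char_pow x y p k
  let φ : F →+ F :=
    { toFun := fun y => y ^ r + y
      map_zero' := by simp [zero_pow hr0.ne']
      map_add' := fun x y => by show (x + y) ^ r + (x + y) = _; rw [hadd]; ring }
  have hφ : ∀ y : F, φ y = y ^ r + y := fun _ => rfl
  -- range is contained in the fixed set S
  set S : Set F := {c : F | c ^ r = c} with hS
  have hrangeS : (φ.range : Set F) ⊆ S := by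
    rintro c ⟨y, rfl⟩
    show (y ^ r + y) ^ r = y ^ r + y
    rw [hadd, ← pow_mul, hpow]
    ring
  -- polynomial bounds
  have hkerle : Nat.card φ.ker ≤ r := by
    have hdeg : (X ^ r + X : F[X]).natDegree = r := by
      rw [natDegree_add_eq_left_of_natDegree_lt] <;>
        simp [natDegree_X_pow, natDegree_X, hr1]
    have hne : (X ^ r + X : F[X]) ≠ 0 := by
      intro h
      rw [h, natDegree_zero] at hdeg
      omega
    calc Nat.card φ.ker = Nat.card {x : F // (X ^ r + X : F[X]).IsRoot x} := by
          apply Nat.card_congr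
          apply Equiv.subtypeEquivRight
          intro x
          simp [AddMonoidHom.mem_ker, hφ, Polynomial.IsRoot]
      _ ≤ (X ^ r + X : F[X]).natDegree := card_root_le' _ hne
      _ = r := hdeg
  have hSle : Nat.card S ≤ r := by
    have hdeg : (X ^ r - X : F[X]).natDegree = r := by
      rw [natDegree_sub_eq_left_of_natDegree_lt] <;>
        simp [natDegree_X_pow, natDegree_X, hr1]
    have hne : (X ^ r - X : F[X]) ≠ 0 := by
      intro h
      rw [h, natDegree_zero] at hdeg
      omega
    calc Nat.card S = Nat.card {x : F // (X ^ r - X : F[X]).IsRoot x} := by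
          apply Nat.card_congr
          apply Equiv.subtypeEquivRight
          intro x
          simp [hS, Polynomial.IsRoot, sub_eq_zero]
      _ ≤ (X ^ r - X : F[X]).natDegree := card_root_le' _ hne
      _ = r := hdeg
  -- first isomorphism theorem
  have hiso : Nat.card F = Nat.card φ.range * Nat.card φ.ker := by
    rw [AddSubgroup.card_eq_card_quotient_mul_card_addSubgroup φ.ker]
    congr 1
    exact Nat.card_congr (QuotientAddGroup.quotientKerEquivRange φ).toEquiv
  have hcardF : Nat.card F = r * r := by rw [Nat.card_eq_fintype_card, hF, sq]
  have hrangele : Nat.card φ.range ≤ r := by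
    calc Nat.card φ.range = Nat.card (φ.range : Set F) := rfl
      _ ≤ Nat.card S := by
          rw [Nat.card_coe_set_eq, Nat.card_coe_set_eq]
          exact Set.ncard_le_ncard hrangeS (Set.toFinite S)
      _ ≤ r := hSle
  have hker : Nat.card φ.ker = r := by
    have h1 : r * r ≤ r * Nat.card φ.ker := by
      calc r * r = Nat.card φ.range * Nat.card φ.ker := by rw [← hiso, hcardF]
        _ ≤ r * Nat.card φ.ker := Nat.mul_le_mul_right _ hrangele
    have := Nat.le_of_mul_le_mul_left h1 hr0
    omega
  have hrange : Nat.card φ.range = r := by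
    have h1 : r * r ≤ Nat.card φ.range * r := by
      calc r * r = Nat.card φ.range * Nat.card φ.ker := by rw [← hiso, hcardF]
        _ ≤ Nat.card φ.range * r := Nat.mul_le_mul_left _ hkerle
    have := Nat.le_of_mul_le_mul_right h1 hr0
    omega
  -- range = S
  have hrangeeq : (φ.range : Set F) = S := by
    apply Set.eq_of_subset_of_ncard_le hrangeS _ (Set.toFinite S)
    rw [← Nat.card_coe_set_eq, ← Nat.card_coe_set_eq]
    calc Nat.card S ≤ r := hSle
      _ = Nat.card (φ.range : Set F) := hrange.symm
  -- fiber count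
  have hfiber : ∀ α : F, Nat.card {β : F // β ^ r + β = α ^ (r + 1)} = r := by
    intro α
    have hc : α ^ (r + 1) ∈ S := by
      show (α ^ (r + 1)) ^ r = α ^ (r + 1)
      rw [← pow_mul, add_mul, one_mul, pow_add, hpow, ← pow_succ']
    rw [← hrangeeq] at hc
    obtain ⟨y₀, hy₀⟩ := hc
    have e : {β : F // β ^ r + β = α ^ (r + 1)} ≃ φ.ker :=
      { toFun := fun b => ⟨b.1 - y₀, by
          rw [AddMonoidHom.mem_ker, map_sub, hy₀, hφ, b.2, sub_self]⟩
        invFun := fun b => ⟨b.1 + y₀, by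
          have hb : φ b.1 = 0 := b.2
          have : φ (b.1 + y₀) = α ^ (r + 1) := by rw [map_add, hb, hy₀, zero_add]
          rw [hφ] at this
          exact this⟩
        left_inv := fun b => by ext; simp
        right_inv := fun b => by ext; simp }
    rw [Nat.card_congr e, hker]
  -- assemble
  rw [Nat.card_congr (Equiv.subtypeProdEquivSigmaSubtype
    (fun (a b : F) => b ^ r + b = a ^ (r + 1)))]
  rw [Nat.card_eq_fintype_card, Fintype.card_sigma]
  have : ∀ α : F, Fintype.card {b : F // b ^ r + b = α ^ (r + 1)} = r := by
    intro α
    rw [← Nat.card_eq_fintype_card]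
    exact hfiber α
  simp only [this, Finset.sum_const, Finset.card_univ, smul_eq_mul, hF]
  ring
end
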